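/- arXiv:1411.5059 — 2 statements merged into one kernel-verified Lean document; each statement's English description precedes it below -/
import Mathlib

section
/- Non-existence of semi co-compact Gabor frames at critical density (discrete case): Let g ∈ L²(G) and let Λ be a closed discrete subgroup of G which is not co-compact (i.e. G/Λ is not compact). Let μ_Λ be a Haar measure on Λ and let μ_{Λ^⊥} be a Haar measure on the annihilator Λ^⊥ ⊂ Ĝ (which is a closed co-compact subgroup of Ĝ since Λ is discrete). Then the Gabor system {E_βT_λg}_{β∈Λ^⊥, λ∈Λ} is not a frame for L²(G): there exist no constants 0 < A ≤ B < ∞ such that (λ,β) ↦ ⟨f, E_βT_λg⟩ is measurable and A‖f‖² ≤ ∫_Λ ∫_{Λ^⊥} |⟨f, E_βT_λg⟩|² dμ_{Λ^⊥}(β) dμ_Λ(λ) ≤ B‖f‖² for all f ∈ L²(G). -/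
open MeasureTheory Complex
open scoped ENNReal NNReal

noncomputable section

/-- The Gabor atom `E_γ T_λ g : x ↦ γ(x)·g(x·λ⁻¹)` (multiplicative notation for the
group operation of `G`; `x·λ⁻¹` corresponds to `x - λ` in additive notation). -/
def gaborAtom {G : Type*} [CommGroup G] [TopologicalSpace G]
    (g : G → ℂ) (γ : PontryaginDual G) (l : G) : G → ℂ :=
  fun x => (γ x : ℂ) * g (x * l⁻¹)

/-- The `L²` pairing `⟨f, h⟩ = ∫ f·conj h`. -/
def ip {G : Type*} [MeasurableSpace G] (μ : MeasureTheory.Measure G) (f h : G → ℂ) : ℂ :=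
  ∫ x, f x * (starRingEnd ℂ) (h x) ∂μ

/-- Annihilator in `G` of a subgroup `Γ` of the Pontryagin dual. -/
def annG {G : Type*} [CommGroup G] [TopologicalSpace G]
    (Γ : Subgroup (PontryaginDual G)) : Subgroup G where
  carrier := {x : G | ∀ γ ∈ Γ, γ x = 1}
  one_mem' := by intro γ hγ; simp
  mul_mem' := by intro a b ha hb γ hγ; rw [map_mul, ha γ hγ, hb γ hγ, one_mul]
  inv_mem' := by intro a ha γ hγ; rw [map_inv, ha γ hγ, inv_one]

/-- Annihilator in the Pontryagin dual of a subgroup `Λ` of `G`. -/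
def annDual {G : Type*} [CommGroup G] [TopologicalSpace G]
    (Λ : Subgroup G) : Subgroup (PontryaginDual G) where
  carrier := {γ : PontryaginDual G | ∀ x ∈ Λ, γ x = 1}
  one_mem' := by intro x hx; rfl
  mul_mem' := by
    intro a b ha hb x hx
    have h : (a * b) x = a x * b x := rfl
    rw [h, ha x hx, hb x hx, one_mul]
  inv_mem' := by
    intro a ha x hx
    have h : (a⁻¹ : PontryaginDual _) x = (a x)⁻¹ := rfl
    rw [h, ha x hx, inv_one]

/-- Weil's formula relating the Haar measures on `A`, a closed subgroup `H` and
the quotient `A ⧸ H`: `∫_A f = ∫_{A⧸H} ∫_H f(x·h) dμ_H(h) dμ_{A⧸H}(xH)`. -/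
def WeilFormula {A : Type*} [CommGroup A] [TopologicalSpace A] [MeasurableSpace A]
    (μ : MeasureTheory.Measure A) (H : Subgroup A) (μH : MeasureTheory.Measure H)
    (μQ : MeasureTheory.Measure (A ⧸ H)) : Prop :=
  ∀ f : A → ℂ, Continuous f → HasCompactSupport f →
    ∫ x, f x ∂μ = ∫ q : A ⧸ H, ∫ h : H, f (Quotient.out q * (h : A)) ∂μH ∂μQ

/-- The Fourier transform `f̂(γ) = ∫ f(x)·conj(γ(x)) dμ(x)`. -/
def fourierCoef {G : Type*} [CommGroup G] [TopologicalSpace G] [MeasurableSpace G]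
    (μ : MeasureTheory.Measure G) (f : G → ℂ) (γ : PontryaginDual G) : ℂ :=
  ∫ x, f x * (starRingEnd ℂ) ((γ x : ℂ)) ∂μ

/-- `μD` is a measure on the dual group which is dual to `μ`, in the sense that the
Plancherel identity holds for all continuous compactly supported functions. -/
def PlancherelDual {G : Type*} [CommGroup G] [TopologicalSpace G] [MeasurableSpace G]
    [MeasurableSpace (PontryaginDual G)]
    (μ : MeasureTheory.Measure G) (μD : MeasureTheory.Measure (PontryaginDual G)) : Prop :=
  ∀ f : G → ℂ, Continuous f → HasCompactSupport f →
    ∫ γ, ‖fourierCoef μ f γ‖ ^ 2 ∂μD = ∫ x, ‖f x‖ ^ 2 ∂μ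

/-- The Gabor system `{E_{ιΓ γ} T_{ιΛ λ} g}` is a Bessel system with bound `B`:
the coefficient map is measurable and the upper frame inequality holds for every
`f ∈ L²(G)`. -/
def GaborBessel {G : Type*} [CommGroup G] [TopologicalSpace G] [MeasurableSpace G]
    {ΛT ΓT : Type*} [MeasurableSpace ΛT] [MeasurableSpace ΓT]
    (μG : MeasureTheory.Measure G) (μΛ : MeasureTheory.Measure ΛT)
    (μΓ : MeasureTheory.Measure ΓT)
    (ιΛ : ΛT → G) (ιΓ : ΓT → PontryaginDual G) (g : G → ℂ) (B : ℝ) : Prop :=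
  ∀ f : G → ℂ, MemLp f 2 μG →
    Measurable (fun p : ΛT × ΓT => ip μG f (gaborAtom g (ιΓ p.2) (ιΛ p.1))) ∧
    ∫⁻ l, ∫⁻ γ, (‖ip μG f (gaborAtom g (ιΓ γ) (ιΛ l))‖₊ : ℝ≥0∞) ^ 2 ∂μΓ ∂μΛ
      ≤ ENNReal.ofReal (B * ∫ x, ‖f x‖ ^ 2 ∂μG)

/-- The Gabor system `{E_{ιΓ γ} T_{ιΛ λ} g}` is a frame for `L²(G)` with bounds `A` and `B`. -/
def GaborFrame {G : Type*} [CommGroup G] [TopologicalSpace G] [MeasurableSpace G]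
    {ΛT ΓT : Type*} [MeasurableSpace ΛT] [MeasurableSpace ΓT]
    (μG : MeasureTheory.Measure G) (μΛ : MeasureTheory.Measure ΛT)
    (μΓ : MeasureTheory.Measure ΓT)
    (ιΛ : ΛT → G) (ιΓ : ΓT → PontryaginDual G) (g : G → ℂ) (A B : ℝ) : Prop :=
  ∀ f : G → ℂ, MemLp f 2 μG →
    Measurable (fun p : ΛT × ΓT => ip μG f (gaborAtom g (ιΓ p.2) (ιΛ p.1))) ∧
    ENNReal.ofReal (A * ∫ x, ‖f x‖ ^ 2 ∂μG)
      ≤ ∫⁻ l, ∫⁻ γ, (‖ip μG f (gaborAtom g (ιΓ γ) (ιΛ l))‖₊ : ℝ≥0∞) ^ 2 ∂μΓ ∂μΛ ∧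
    ∫⁻ l, ∫⁻ γ, (‖ip μG f (gaborAtom g (ιΓ γ) (ιΛ l))‖₊ : ℝ≥0∞) ^ 2 ∂μΓ ∂μΛ
      ≤ ENNReal.ofReal (B * ∫ x, ‖f x‖ ^ 2 ∂μG)

/-- The two Gabor systems generated by `g` and `h` are dual frames:
`⟨f₁, f₂⟩ = ∫_Λ ∫_Γ ⟨f₁, E_γT_λh⟩·⟨E_γT_λg, f₂⟩` for all `f₁, f₂ ∈ L²(G)`. -/
def GaborDualFrames {G : Type*} [CommGroup G] [TopologicalSpace G] [MeasurableSpace G]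
    {ΛT ΓT : Type*} [MeasurableSpace ΛT] [MeasurableSpace ΓT]
    (μG : MeasureTheory.Measure G) (μΛ : MeasureTheory.Measure ΛT)
    (μΓ : MeasureTheory.Measure ΓT)
    (ιΛ : ΛT → G) (ιΓ : ΓT → PontryaginDual G) (g h : G → ℂ) : Prop :=
  ∀ f₁ f₂ : G → ℂ, MemLp f₁ 2 μG → MemLp f₂ 2 μG →
    ip μG f₁ f₂ =
      ∫ l, ∫ γ, ip μG f₁ (gaborAtom h (ιΓ γ) (ιΛ l)) * ip μG (gaborAtom g (ιΓ γ) (ιΛ l)) f₂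
        ∂μΓ ∂μΛ

end

/-!
Suppose the system were a frame with bounds `A ≤ B`. After changing `g` on a null set, the set
`S₀ = {δ ≤ |g|}` has positive finite measure for some `δ > 0`. Test the lower frame bound on the
indicator `f` of a translate `S₀ w`. On `S₀ w` the window `T_w g` does not vanish, so each
coefficient `⟨f, E_β T_λ g⟩` is a coefficient `⟨F_λ, E_β T_w g⟩` of a function with
`δ |F_λ| ≤ |T_λ g|`, and the upper frame bound, restricted to the single atom `λ = 1` of `μ_Λ`,
yields `μ_Λ{1} δ² A |S₀| ≤ B ∫_{S₀} P(x w) dx`, where `P(x) = ∫_Λ |g(x λ⁻¹)|² dμ_Λ(λ)` is the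
periodization of `|g|²`.

A set `E` on which `G → G ⧸ Λ` is injective meets every coset `xΛ` at most once, hence
`∫_E P ≤ μ_Λ{1} ‖g‖²`. As `G ⧸ Λ` is not compact, disjoint translates of a small neighbourhood of
`1` build such sets `W` of arbitrarily large Haar measure, and averaging `∫_{S₀} P(x w) dx` over
`w ∈ W` shows that its infimum over `w` is `0`, contradicting `A |S₀| > 0`.
-/

open Pointwise

theorem MeasureTheory.MemLp.ofReal_integral_norm_sq {α E : Type*} [MeasurableSpace α]
    {μ : Measure α} [NormedAddCommGroup E] {f : α → E} (hf : MemLp f 2 μ) :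
    ENNReal.ofReal (∫ x, ‖f x‖ ^ 2 ∂μ) = ∫⁻ x, ‖f x‖ₑ ^ 2 ∂μ := by
  rw [ofReal_integral_eq_lintegral_ofReal (hf.integrable_norm_pow two_ne_zero)
    (ae_of_all _ fun _ => by positivity)]
  simp_rw [ENNReal.ofReal_pow (norm_nonneg _), ofReal_norm]

theorem MeasureTheory.exists_measure_le_enorm_pos {α E : Type*} [MeasurableSpace α]
    {μ : Measure α} [NormedAddCommGroup E] {f : α → E} (hf : ¬ f =ᵐ[μ] 0) :
    ∃ δ : ℝ≥0, δ ≠ 0 ∧ 0 < μ {x | δ ≤ ‖f x‖ₑ} := by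
  by_contra! H
  refine hf (ae_iff.2 (measure_mono_null (fun x hx => ?_) (measure_iUnion_null
    fun n : ℕ => nonpos_iff_eq_zero.1 (H ((n + 1 : ℝ≥0)⁻¹) (by positivity)))))
  obtain ⟨n, hn⟩ := ENNReal.exists_inv_nat_lt (enorm_ne_zero.2 hx)
  refine Set.mem_iUnion.2 ⟨n, le_trans ?_ hn.le⟩
  simp only [ENNReal.coe_inv (by positivity : (n + 1 : ℝ≥0) ≠ 0)]
  gcongr
  simp

theorem MeasureTheory.measure_le_measure_one_of_subsingleton {H : Type*} [Group H]
    [MeasurableSpace H] [MeasurableMul H] (ν : Measure H) [ν.IsMulLeftInvariant] {s : Set H}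
    (hs : s.Subsingleton) : ν s ≤ ν {1} := by
  rcases hs.eq_empty_or_singleton with rfl | ⟨l, rfl⟩
  · simp
  · simpa using (measure_preimage_mul ν l⁻¹ {1}).le

section GaborSystem

variable {G : Type*} [CommGroup G] [TopologicalSpace G] [MeasurableSpace G] {μ : Measure G}
  {ΛT ΓT : Type*} [MeasurableSpace ΛT] [MeasurableSpace ΓT] {μΛ : Measure ΛT}
  {μΓ : Measure ΓT} {ιΛ : ΛT → G} {ιΓ : ΓT → PontryaginDual G} {g : G → ℂ} {A B : ℝ}

theorem GaborFrame.gaborBessel (h : GaborFrame μ μΛ μΓ ιΛ ιΓ g A B) :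
    GaborBessel μ μΛ μΓ ιΛ ιΓ g B :=
  fun f hf => ⟨(h f hf).1, (h f hf).2.2⟩

variable [MeasurableMul G] [μ.IsMulRightInvariant]

theorem ip_comp_mul_right_gaborAtom (F g : G → ℂ) (β : PontryaginDual G) (u v : G) :
    ip μ (fun x => F (x * v)) (gaborAtom g β u) = β v * ip μ F (gaborAtom g β (u * v)) := by
  unfold ip gaborAtom
  rw [← integral_const_mul]
  conv_rhs => rw [← integral_mul_right_eq_self _ v]
  congr 1
  ext x
  have hβ : (β v : ℂ) * starRingEnd ℂ (β v) = 1 := by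
    rw [← Circle.coe_inv_eq_conj, ← Circle.coe_mul, mul_inv_cancel, Circle.coe_one]
  have hx : x * v * (u * v)⁻¹ = x * u⁻¹ := by rw [mul_inv_rev, mul_assoc, mul_inv_cancel_left]
  simp only [map_mul, Circle.coe_mul, hx]
  linear_combination -(F (x * v) * starRingEnd ℂ (β x) * starRingEnd ℂ (g (x * u⁻¹))) * hβ

theorem enorm_ip_comp_mul_right_gaborAtom (F g : G → ℂ) (β : PontryaginDual G) (u v : G) :
    ‖ip μ (fun x => F (x * v)) (gaborAtom g β u)‖ₑ =
      ‖ip μ F (gaborAtom g β (u * v))‖ₑ := by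
  rw [ip_comp_mul_right_gaborAtom, enorm_mul, ← ofReal_norm, Circle.norm_coe,
    ENNReal.ofReal_one, one_mul]

theorem GaborBessel.mul_lintegral_le [MeasurableSingletonClass ΛT]
    (h : GaborBessel μ μΛ μΓ ιΛ ιΓ g B) (l₀ : ΛT) {F : G → ℂ} (hF : MemLp F 2 μ) (w : G) :
    μΛ {l₀} * ∫⁻ γ, ‖ip μ F (gaborAtom g (ιΓ γ) w)‖ₑ ^ 2 ∂μΓ
      ≤ ENNReal.ofReal B * ∫⁻ x, ‖F x‖ₑ ^ 2 ∂μ := by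
  set v := (ιΛ l₀)⁻¹ * w
  set Fv := fun x => F (x * v)
  have hFv : MemLp Fv 2 μ := hF.comp_measurePreserving (measurePreserving_mul_right μ v)
  calc μΛ {l₀} * ∫⁻ γ, ‖ip μ F (gaborAtom g (ιΓ γ) w)‖ₑ ^ 2 ∂μΓ
      = ∫⁻ l in {l₀}, ∫⁻ γ, ‖ip μ Fv (gaborAtom g (ιΓ γ) (ιΛ l))‖ₑ ^ 2 ∂μΓ ∂μΛ := by
        simp_rw [Fv, lintegral_singleton, enorm_ip_comp_mul_right_gaborAtom, v,
          mul_inv_cancel_left, mul_comm]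
    _ ≤ ∫⁻ l, ∫⁻ γ, ‖ip μ Fv (gaborAtom g (ιΓ γ) (ιΛ l))‖ₑ ^ 2 ∂μΓ ∂μΛ :=
        setLIntegral_le_lintegral _ _
    _ ≤ ENNReal.ofReal (B * ∫ x, ‖Fv x‖ ^ 2 ∂μ) := (h _ hFv).2
    _ = ENNReal.ofReal B * ∫⁻ x, ‖F x‖ₑ ^ 2 ∂μ := by
        rw [ENNReal.ofReal_mul' (by positivity), hFv.ofReal_integral_norm_sq,
          lintegral_mul_right_eq_self (fun x => ‖F x‖ₑ ^ 2)]

theorem GaborBessel.mul_sq_mul_lintegral_indicator_le [MeasurableSingletonClass ΛT]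
    (h : GaborBessel μ μΛ μΓ ιΛ ιΓ g B) (l₀ : ΛT) (hg : MemLp g 2 μ) (hgm : Measurable g)
    {S : Set G} (hS : MeasurableSet S) {δ : ℝ≥0} (hδ : δ ≠ 0) {w : G}
    (hSδ : ∀ x ∈ S, δ ≤ ‖g (x * w⁻¹)‖ₑ) (u : G) :
    μΛ {l₀} * δ ^ 2 * ∫⁻ γ, ‖ip μ (S.indicator 1) (gaborAtom g (ιΓ γ) u)‖ₑ ^ 2 ∂μΓ
      ≤ ENNReal.ofReal B * ∫⁻ x in S, ‖g (x * u⁻¹)‖ₑ ^ 2 ∂μ := by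
  have hne : ∀ x ∈ S, starRingEnd ℂ (g (x * w⁻¹)) ≠ 0 := fun x hx h0 =>
    hδ (by simpa [(map_eq_zero _).1 h0] using hSδ x hx)
  set F := S.indicator fun x => starRingEnd ℂ (g (x * u⁻¹)) / starRingEnd ℂ (g (x * w⁻¹))
  have hip : ∀ β, ip μ (S.indicator 1) (gaborAtom g β u) = ip μ F (gaborAtom g β w) := by
    intro β
    unfold ip gaborAtom
    congr with x
    by_cases hx : x ∈ S
    · have := hne x hx
      simp only [F, Set.indicator_of_mem hx, Pi.one_apply, one_mul, map_mul]
      field_simp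
    · simp [F, hx]
  have hF_le : ∀ x, δ * ‖F x‖ₑ ≤ S.indicator (fun x => ‖g (x * u⁻¹)‖ₑ) x := by
    intro x
    by_cases hx : x ∈ S
    · simp only [F, Set.indicator_of_mem hx]
      rw [div_eq_mul_inv, enorm_mul, enorm_inv (hne x hx), RCLike.enorm_conj, RCLike.enorm_conj,
        ← div_eq_mul_inv]
      calc (δ : ℝ≥0∞) * (‖g (x * u⁻¹)‖ₑ / ‖g (x * w⁻¹)‖ₑ)
          ≤ ‖g (x * w⁻¹)‖ₑ * (‖g (x * u⁻¹)‖ₑ / ‖g (x * w⁻¹)‖ₑ) := by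
            gcongr
            exact hSδ x hx
        _ ≤ ‖g (x * u⁻¹)‖ₑ := ENNReal.mul_div_le
    · simp [F, hx]
  have hF : MemLp F 2 μ := by
    refine MemLp.of_enorm_le_mul (c := δ⁻¹)
      (hg.comp_measurePreserving (measurePreserving_mul_right μ u⁻¹))
      (Measurable.indicator (by fun_prop) hS).aestronglyMeasurable (ae_of_all _ fun x => ?_)
    rw [ENNReal.coe_inv hδ]
    exact (ENNReal.mul_le_iff_le_inv (by simpa using hδ) ENNReal.coe_ne_top).1
      ((hF_le x).trans (Set.indicator_le_self _ _ x))
  calc μΛ {l₀} * δ ^ 2 * ∫⁻ γ, ‖ip μ (S.indicator 1) (gaborAtom g (ιΓ γ) u)‖ₑ ^ 2 ∂μΓ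
      = δ ^ 2 * (μΛ {l₀} * ∫⁻ γ, ‖ip μ F (gaborAtom g (ιΓ γ) w)‖ₑ ^ 2 ∂μΓ) := by
        simp only [hip]
        ring
    _ ≤ δ ^ 2 * (ENNReal.ofReal B * ∫⁻ x, ‖F x‖ₑ ^ 2 ∂μ) :=
        mul_le_mul_right (h.mul_lintegral_le l₀ hF w) _
    _ = ENNReal.ofReal B * ∫⁻ x, (δ * ‖F x‖ₑ) ^ 2 ∂μ := by
        simp_rw [mul_pow]
        rw [lintegral_const_mul' _ _ (by simp)]
        ring
    _ ≤ ENNReal.ofReal B * ∫⁻ x, S.indicator (fun x => ‖g (x * u⁻¹)‖ₑ) x ^ 2 ∂μ := by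
        gcongr with x
        exact hF_le x
    _ = ENNReal.ofReal B * ∫⁻ x in S, ‖g (x * u⁻¹)‖ₑ ^ 2 ∂μ := by
        rw [← lintegral_indicator hS]
        congr with x
        by_cases hx : x ∈ S <;> simp [hx]

theorem ip_gaborAtom_congr_ae {g' : G → ℂ} (hg : g =ᵐ[μ] g') (f : G → ℂ)
    (β : PontryaginDual G) (u : G) : ip μ f (gaborAtom g β u) = ip μ f (gaborAtom g' β u) := by
  refine integral_congr_ae ?_
  filter_upwards [(measurePreserving_mul_right μ u⁻¹).quasiMeasurePreserving.ae_eq_comp hg]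
    with x hx
  simp only [gaborAtom, Function.comp_apply] at hx ⊢
  rw [hx]

theorem GaborFrame.congr_ae {g' : G → ℂ} (h : GaborFrame μ μΛ μΓ ιΛ ιΓ g A B)
    (hg : g =ᵐ[μ] g') : GaborFrame μ μΛ μΓ ιΛ ιΓ g' A B := by
  unfold GaborFrame at h ⊢
  simpa only [ip_gaborAtom_congr_ae hg] using h

theorem GaborFrame.not_ae_eq_zero [OpensMeasurableSpace G] [IsLocallyFiniteMeasure μ]
    [μ.IsOpenPosMeasure] (h : GaborFrame μ μΛ μΓ ιΛ ιΓ g A B) (hA : 0 < A) :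
    ¬ g =ᵐ[μ] 0 := by
  intro hg
  obtain ⟨s, hs1, hs, hsμ⟩ := μ.exists_isOpen_measure_lt_top (1 : G)
  have hf : MemLp (s.indicator 1 : G → ℂ) 2 μ :=
    memLp_indicator_const 2 hs.measurableSet 1 (Or.inr hsμ.ne)
  have hlower := ((h.congr_ae hg) _ hf).2.1
  have hsq : (fun x => s.indicator (fun _ => (1 : ℝ)) x ^ 2) = s.indicator 1 := by
    ext x
    by_cases hx : x ∈ s <;> simp [hx]
  have hpos : 0 < μ.real s := ENNReal.toReal_pos (hs.measure_pos μ ⟨1, hs1⟩).ne' hsμ.ne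
  simp [ip, gaborAtom, norm_indicator_eq_indicator_norm, hsq,
    integral_indicator_one hs.measurableSet] at hlower
  nlinarith

end GaborSystem

namespace QuotientGroup

variable {G : Type*} [CommGroup G] {Λ : Subgroup G}

theorem injOn_mk_smul {W : Set G} (h : Set.InjOn (mk : G → G ⧸ Λ) W) (z : G) :
    Set.InjOn (mk : G → G ⧸ Λ) (z • W) := by
  rintro _ ⟨a, ha, rfl⟩ _ ⟨b, hb, rfl⟩ hab
  simp only [smul_eq_mul, mk_mul, mul_right_inj] at hab
  rw [h ha hb hab]

variable [TopologicalSpace G] [IsTopologicalGroup G]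

theorem exists_disjoint_image_mk_smul (hΛ : ¬ CompactSpace (G ⧸ Λ)) {C K : Set G}
    (hC : IsCompact C) (hK : IsCompact K) :
    ∃ z : G, Disjoint ((mk : G → G ⧸ Λ) '' (z • C)) (mk '' K) := by
  have hne : (mk : G → G ⧸ Λ) '' (K * C⁻¹) ≠ Set.univ := fun h =>
    hΛ (isCompact_univ_iff.1 (h ▸ (hK.mul hC.inv).image continuous_quotient_mk'))
  obtain ⟨q, hq⟩ := Set.ne_univ_iff_exists_notMem _ |>.1 hne
  induction q using QuotientGroup.induction_on with | H z => ?_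
  refine ⟨z, Set.disjoint_left.2 ?_⟩
  rintro _ ⟨_, ⟨c, hc, rfl⟩, rfl⟩ ⟨k, hk, hkc⟩
  refine hq ⟨k * c⁻¹, Set.mul_mem_mul hk (Set.inv_mem_inv.2 hc), ?_⟩
  simp [mk_mul, mk_inv, hkc]

theorem exists_isOpen_injOn_mk [WeaklyLocallyCompactSpace G] [DiscreteTopology Λ] :
    ∃ V C : Set G, IsOpen V ∧ (1 : G) ∈ V ∧ IsCompact C ∧ V ⊆ C ∧
      Set.InjOn (mk : G → G ⧸ Λ) V := by
  obtain ⟨U, hU, hUΛ⟩ := nhds_inter_eq_singleton_of_mem_discrete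
    (SetLike.isDiscrete_iff_discreteTopology.2 ‹_›) Λ.one_mem
  obtain ⟨C, hC, hCn⟩ := exists_compact_mem_nhds (1 : G)
  obtain ⟨V, hVo, hV1, hVmul⟩ := exists_open_nhds_one_split (Filter.inter_mem hU hCn)
  refine ⟨V ∩ V⁻¹, C, hVo.inter hVo.inv, ⟨hV1, by simpa using hV1⟩, hC,
    fun v hv => ?_, fun a ha b hb hab => ?_⟩
  · simpa using (hVmul 1 hV1 v hv.1).2
  · have hmem : a⁻¹ * b ∈ U ∩ Λ := ⟨(hVmul _ ha.2 _ hb.1).1, QuotientGroup.eq.1 hab⟩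
    rw [hUΛ] at hmem
    exact inv_mul_eq_one.1 hmem

variable [MeasurableSpace G] [BorelSpace G]

theorem exists_injOn_mk_nat_mul_le (hΛ : ¬ CompactSpace (G ⧸ Λ)) (μ : Measure G)
    [μ.IsMulLeftInvariant] {V C : Set G} (hV : MeasurableSet V) (hVC : V ⊆ C)
    (hC : IsCompact C) (hinj : Set.InjOn (mk : G → G ⧸ Λ) V) (N : ℕ) :
    ∃ W K : Set G, MeasurableSet W ∧ Set.InjOn (mk : G → G ⧸ Λ) W ∧ W ⊆ K ∧
      IsCompact K ∧ N * μ V ≤ μ W := by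
  induction N with
  | zero => exact ⟨∅, ∅, .empty, Set.injOn_empty _, subset_rfl, isCompact_empty, by simp⟩
  | succ N ih =>
    obtain ⟨W, K, hW, hWinj, hWK, hK, hμW⟩ := ih
    obtain ⟨z, hz⟩ := exists_disjoint_image_mk_smul hΛ hC hK
    have hdisj : Disjoint ((mk : G → G ⧸ Λ) '' W) (mk '' (z • V)) :=
      (hz.mono (Set.image_mono (Set.smul_set_mono hVC)) (Set.image_mono hWK)).symm
    refine ⟨W ∪ z • V, K ∪ z • C, hW.union (hV.const_smul z), ?_,
      Set.union_subset_union hWK (Set.smul_set_mono hVC), hK.union (hC.smul z), ?_⟩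
    · exact (Set.injOn_union (Disjoint.of_image hdisj)).2 ⟨hWinj, injOn_mk_smul hinj z,
        fun a ha b hb hab => Set.disjoint_left.1 hdisj ⟨a, ha, rfl⟩ ⟨b, hb, hab.symm⟩⟩
    · rw [measure_union (Disjoint.of_image hdisj) (hV.const_smul z), measure_smul]
      push_cast
      rw [add_mul, one_mul]
      gcongr

theorem exists_injOn_mk_measure_gt [WeaklyLocallyCompactSpace G] [DiscreteTopology Λ]
    (hΛ : ¬ CompactSpace (G ⧸ Λ)) (μ : Measure G) [μ.IsHaarMeasure] {M : ℝ≥0∞}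
    (hM : M ≠ ⊤) : ∃ W : Set G, MeasurableSet W ∧ Set.InjOn (mk : G → G ⧸ Λ) W ∧ M < μ W := by
  obtain ⟨V, C, hV, hV1, hC, hVC, hinj⟩ := exists_isOpen_injOn_mk (Λ := Λ)
  obtain ⟨N, hN⟩ := ENNReal.exists_nat_mul_gt (hV.measure_pos μ ⟨1, hV1⟩).ne' hM
  obtain ⟨W, -, hW, hWinj, -, -, hμW⟩ :=
    exists_injOn_mk_nat_mul_le hΛ μ hV.measurableSet hVC hC hinj N
  exact ⟨W, hW, hWinj, hN.trans_le hμW⟩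

end QuotientGroup

section Periodization

variable {G : Type*} [CommGroup G] [TopologicalSpace G] [IsTopologicalGroup G]
  [SecondCountableTopology G] [MeasurableSpace G] [BorelSpace G] {Λ : Subgroup G}

noncomputable def periodization (μΛ : Measure Λ) (h : G → ℝ≥0∞) (x : G) : ℝ≥0∞ :=
  ∫⁻ l, h (x * (l : G)⁻¹) ∂μΛ

variable {μΛ : Measure Λ} [SFinite μΛ] {h : G → ℝ≥0∞}

@[fun_prop]
theorem measurable_periodization (hh : Measurable h) : Measurable (periodization μΛ h) :=
  Measurable.lintegral_prod_right (by fun_prop)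

theorem setLIntegral_periodization_le (μ : Measure G) [μ.IsMulRightInvariant] [SFinite μ]
    [μΛ.IsMulLeftInvariant] (hh : Measurable h) {E : Set G} (hE : MeasurableSet E)
    (hinj : Set.InjOn (QuotientGroup.mk : G → G ⧸ Λ) E) :
    ∫⁻ x in E, periodization μΛ h x ∂μ ≤ μΛ {1} * ∫⁻ x, h x ∂μ := by
  have hfiber : ∀ y : G, ({l : Λ | y * l ∈ E}).Subsingleton := by
    intro y l hl l' hl'
    have hmk := hinj hl hl' (QuotientGroup.eq.2 (by simpa using Λ.mul_mem (Λ.inv_mem l.2) l'.2))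
    exact Subtype.ext (mul_left_cancel hmk)
  have hind : Measurable fun p : G × Λ => E.indicator (1 : G → ℝ≥0∞) (p.1 * p.2) :=
    (measurable_one.indicator hE).comp (by fun_prop)
  calc ∫⁻ x in E, periodization μΛ h x ∂μ
      = ∫⁻ l, ∫⁻ x in E, h (x * (l : G)⁻¹) ∂μ ∂μΛ := lintegral_lintegral_swap (by fun_prop)
    _ = ∫⁻ l, ∫⁻ y, h y * E.indicator 1 (y * l) ∂μ ∂μΛ := by
        congr with l
        rw [← lintegral_indicator hE, ← lintegral_mul_right_eq_self _ (l : G)]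
        congr with y
        by_cases hy : y * l ∈ E <;> simp [hy]
    _ = ∫⁻ y, h y * μΛ {l : Λ | y * l ∈ E} ∂μ := by
        rw [lintegral_lintegral_swap (by fun_prop)]
        congr with y
        rw [lintegral_const_mul (f := fun l : Λ => E.indicator 1 (y * l)) _
            (hind.comp measurable_prodMk_left),
          ← lintegral_indicator_one (s := {l : Λ | y * l ∈ E})
            (measurable_subtype_coe.const_mul y hE)]
        rfl
    _ ≤ ∫⁻ y, h y * μΛ {1} ∂μ := lintegral_mono fun y =>
        mul_le_mul_right (measure_le_measure_one_of_subsingleton μΛ (hfiber y)) _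
    _ = μΛ {1} * ∫⁻ x, h x ∂μ := by rw [lintegral_mul_const _ hh, mul_comm]

theorem iInf_setLIntegral_periodization_mul_eq_zero [LocallyCompactSpace G]
    [DiscreteTopology Λ] (hΛ : ¬ CompactSpace (G ⧸ Λ)) (μ : Measure G) [μ.IsHaarMeasure]
    [μΛ.IsMulLeftInvariant] (hμΛ : μΛ {1} ≠ ⊤) (hh : Measurable h)
    (hh_fin : ∫⁻ x, h x ∂μ ≠ ⊤) {S : Set G} (hS : μ S ≠ ⊤) :
    ⨅ w, ∫⁻ x in S, periodization μΛ h (x * w) ∂μ = 0 := by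
  set m := ⨅ w, ∫⁻ x in S, periodization μΛ h (x * w) ∂μ
  by_contra hm
  have hK : μ S * (μΛ {1} * ∫⁻ x, h x ∂μ) ≠ ⊤ :=
    ENNReal.mul_ne_top hS (ENNReal.mul_ne_top hμΛ hh_fin)
  obtain ⟨W, hW, hWinj, hμW⟩ :=
    QuotientGroup.exists_injOn_mk_measure_gt hΛ μ (ENNReal.div_ne_top hK hm)
  refine hμW.not_ge ((ENNReal.le_div_iff_mul_le (Or.inl hm) (Or.inr hK)).2 ?_)
  calc μ W * m = ∫⁻ _ in W, m ∂μ := by rw [setLIntegral_const, mul_comm]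
    _ ≤ ∫⁻ w in W, ∫⁻ x in S, periodization μΛ h (x * w) ∂μ ∂μ :=
        lintegral_mono fun w => iInf_le _ w
    _ = ∫⁻ x in S, ∫⁻ w in W, periodization μΛ h (x * w) ∂μ ∂μ :=
        lintegral_lintegral_swap (by fun_prop)
    _ ≤ ∫⁻ _ in S, μΛ {1} * ∫⁻ x, h x ∂μ ∂μ := lintegral_mono fun x =>
        ((measurePreserving_smul x μ).setLIntegral_comp_emb
          (measurableEmbedding_const_smul x) _ W).trans_le
          (setLIntegral_periodization_le μ hh (hW.const_smul x)
            (QuotientGroup.injOn_mk_smul hWinj x))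
    _ = μ S * (μΛ {1} * ∫⁻ x, h x ∂μ) := by rw [setLIntegral_const, mul_comm]

variable {μ : Measure G} [μ.IsMulRightInvariant] [SFinite μ] {ΓT : Type*} [MeasurableSpace ΓT]
  {μΓ : Measure ΓT} {ιΓ : ΓT → PontryaginDual G} {g : G → ℂ} {A B : ℝ}

theorem GaborFrame.mul_measure_le_setLIntegral_periodization [DiscreteTopology Λ]
    (h : GaborFrame μ μΛ μΓ (fun l : Λ => (l : G)) ιΓ g A B) (hg : MemLp g 2 μ)
    (hgm : Measurable g) {S₀ : Set G} (hS₀ : MeasurableSet S₀) (hS₀μ : μ S₀ ≠ ⊤)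
    {δ : ℝ≥0} (hδ : δ ≠ 0) (hS₀δ : ∀ x ∈ S₀, δ ≤ ‖g x‖ₑ) (w : G) :
    μΛ {1} * δ ^ 2 * (ENNReal.ofReal A * μ S₀)
      ≤ ENNReal.ofReal B * ∫⁻ x in S₀, periodization μΛ (fun y => ‖g y‖ₑ ^ 2) (x * w) ∂μ := by
  set S := (· * w⁻¹) ⁻¹' S₀
  set f : G → ℂ := S.indicator 1
  have hS : MeasurableSet S := hS₀.preimage (measurable_mul_const _)
  have hμS : μ S = μ S₀ := measure_preimage_mul_right μ w⁻¹ S₀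
  have hf : MemLp f 2 μ := memLp_indicator_const 2 hS 1 (Or.inr (hμS ▸ hS₀μ))
  have hf_norm : ∫⁻ x, ‖f x‖ₑ ^ 2 ∂μ = μ S₀ := by
    rw [← hμS, ← lintegral_indicator_one hS]
    congr with x
    by_cases hx : x ∈ S <;> simp [f, hx]
  have hlower := (h f hf).2.1
  simp only [← enorm_eq_nnnorm] at hlower
  calc μΛ {1} * δ ^ 2 * (ENNReal.ofReal A * μ S₀)
      = μΛ {1} * δ ^ 2 * ENNReal.ofReal (A * ∫ x, ‖f x‖ ^ 2 ∂μ) := by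
        rw [ENNReal.ofReal_mul' (by positivity), hf.ofReal_integral_norm_sq, hf_norm]
    _ ≤ μΛ {1} * δ ^ 2 *
          ∫⁻ l : Λ, ∫⁻ γ, ‖ip μ f (gaborAtom g (ιΓ γ) l)‖ₑ ^ 2 ∂μΓ ∂μΛ := by
        gcongr
    _ ≤ ∫⁻ l : Λ, μΛ {1} * δ ^ 2 *
          ∫⁻ γ, ‖ip μ f (gaborAtom g (ιΓ γ) l)‖ₑ ^ 2 ∂μΓ ∂μΛ :=
        lintegral_const_mul_le _ _
    _ ≤ ∫⁻ l : Λ, ENNReal.ofReal B * ∫⁻ x in S, ‖g (x * (l : G)⁻¹)‖ₑ ^ 2 ∂μ ∂μΛ :=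
        lintegral_mono fun l => h.gaborBessel.mul_sq_mul_lintegral_indicator_le 1 hg hgm hS hδ
          (fun x hx => hS₀δ _ hx) l
    _ = ENNReal.ofReal B * ∫⁻ x in S, periodization μΛ (fun y => ‖g y‖ₑ ^ 2) x ∂μ := by
        rw [lintegral_const_mul' _ _ ENNReal.ofReal_ne_top]
        unfold periodization
        rw [lintegral_lintegral_swap (by fun_prop)]
    _ = ENNReal.ofReal B * ∫⁻ x in S₀, periodization μΛ (fun y => ‖g y‖ₑ ^ 2) (x * w) ∂μ := by
        have hpre : (· * w) ⁻¹' S = S₀ := by ext x; simp [S]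
        rw [← (measurePreserving_mul_right μ w).setLIntegral_comp_preimage_emb
          (measurableEmbedding_mulRight w) _ S, hpre]

end Periodization

theorem no_critical_density_gabor_frame_discrete_general
    {G : Type*} [CommGroup G] [TopologicalSpace G] [IsTopologicalGroup G]
    [LocallyCompactSpace G] [SecondCountableTopology G]
    [MeasurableSpace G] [BorelSpace G]
    (μG : Measure G) [μG.IsHaarMeasure]
    [MeasurableSpace (PontryaginDual G)]
    (Λ : Subgroup G) [DiscreteTopology Λ]
    (hΛnc : ¬ CompactSpace (G ⧸ Λ))
    (μΛ : Measure Λ) [μΛ.IsHaarMeasure]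
    (μB : Measure (annDual Λ))
    (g : G → ℂ) (hg : MemLp g 2 μG) :
    ¬ ∃ A B : ℝ, 0 < A ∧ A ≤ B ∧
      GaborFrame μG μΛ μB (fun l : Λ => (l : G))
        (fun β : annDual Λ => (β : PontryaginDual G)) g A B := by
  rintro ⟨A, B, hA, -, hframe⟩
  obtain ⟨g', hg'm, hgg'⟩ : ∃ g', Measurable g' ∧ g =ᵐ[μG] g' :=
    ⟨_, hg.1.aemeasurable.measurable_mk, hg.1.aemeasurable.ae_eq_mk⟩
  have hg' : MemLp g' 2 μG := hg.ae_eq hgg'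
  replace hframe := hframe.congr_ae hgg'
  obtain ⟨δ, hδ, hS₀⟩ := exists_measure_le_enorm_pos (hframe.not_ae_eq_zero hA)
  have hS₀μ : μG {x | δ ≤ ‖g' x‖ₑ} ≠ ⊤ :=
    (hg'.meas_ge_lt_top_enorm two_ne_zero ENNReal.ofNat_ne_top hδ).ne
  have hμΛ : μΛ {1} ≠ 0 := ((isOpen_discrete {1}).measure_pos μΛ ⟨1, rfl⟩).ne'
  have hlow : μΛ {1} * δ ^ 2 * (ENNReal.ofReal A * μG {x | δ ≤ ‖g' x‖ₑ}) ≤ 0 :=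
    calc _ ≤ ⨅ w, ENNReal.ofReal B * ∫⁻ x in {x | δ ≤ ‖g' x‖ₑ},
          periodization μΛ (fun y => ‖g' y‖ₑ ^ 2) (x * w) ∂μG :=
          le_iInf fun w => hframe.mul_measure_le_setLIntegral_periodization hg' hg'm
            (measurableSet_le measurable_const hg'm.enorm) hS₀μ hδ (fun _ hx => hx) w
      _ = 0 := by
        rw [← ENNReal.mul_iInf (by simp), iInf_setLIntegral_periodization_mul_eq_zero hΛnc μG
          isCompact_singleton.measure_lt_top.ne (by fun_prop)
          (hg'.ofReal_integral_norm_sq ▸ ENNReal.ofReal_ne_top) hS₀μ, mul_zero]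
  exact mul_ne_zero (mul_ne_zero hμΛ (pow_ne_zero 2 (by simpa using hδ)))
    (mul_ne_zero (ENNReal.ofReal_pos.2 hA).ne' hS₀.ne') (nonpos_iff_eq_zero.1 hlow)

/-- **Non-existence of semi co-compact Gabor frames at critical density (discrete case).**
If `Λ ⊂ G` is a closed discrete subgroup which is not co-compact, then for any
`g ∈ L²(G)` the Gabor system `{E_β T_λ g}_{β ∈ Λ^⊥, λ ∈ Λ}` is not a frame for
`L²(G)`. -/
theorem no_critical_density_gabor_frame_discrete
    {G : Type*} [CommGroup G] [TopologicalSpace G] [IsTopologicalGroup G]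
    [LocallyCompactSpace G] [SecondCountableTopology G] [T2Space G]
    [MeasurableSpace G] [BorelSpace G]
    (μG : Measure G) [μG.IsHaarMeasure]
    [MeasurableSpace (PontryaginDual G)] [BorelSpace (PontryaginDual G)]
    (Λ : Subgroup G) (hΛc : IsClosed (Λ : Set G)) [DiscreteTopology Λ]
    (hΛnc : ¬ CompactSpace (G ⧸ Λ))
    (μΛ : Measure Λ) [μΛ.IsHaarMeasure]
    (μB : Measure (annDual Λ)) [μB.IsHaarMeasure]
    (g : G → ℂ) (hg : MemLp g 2 μG) :
    ¬ ∃ A B : ℝ, 0 < A ∧ A ≤ B ∧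
      GaborFrame μG μΛ μB (fun l : Λ => (l : G))
        (fun β : annDual Λ => (β : PontryaginDual G)) g A B :=
  no_critical_density_gabor_frame_discrete_general μG Λ hΛnc μΛ μB g hg
end

section
/- Characterization of Riesz sequences in Hilbert spaces: Let (f_k)_{k∈ℕ} be a sequence in a complex Hilbert space H and let 0 < A ≤ B < ∞. Then the following are equivalent: (a) (f_k) is a Riesz sequence with lower bound A and upper bound B, i.e. A·∑_k |c_k|² ≤ ‖∑_k c_k f_k‖² ≤ B·∑_k |c_k|² for every finitely supported sequence (c_k) of complex numbers; (b) (f_k) is a Bessel system with bound B, i.e. ∑_k |⟨f, f_k⟩|² ≤ B‖f‖² for all f ∈ H, and there exists a sequence (g_k) in H biorthogonal to (f_k), i.e. ⟨f_j, g_k⟩ = 1 if j = k and 0 otherwise, which is a Bessel system with bound A⁻¹, i.e. ∑_k |⟨f, g_k⟩|² ≤ A⁻¹‖f‖² for all f ∈ H. -/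
/-!
Synthesis `c ↦ ∑ cₖ fₖ` and analysis `x ↦ (⟪x, fₖ⟫)ₖ` are adjoint, so by Cauchy–Schwarz the upper
Riesz bound and the Bessel bound are the same inequality. Biorthogonality turns the coefficients of
`x = ∑ cₖ fₖ` into `conj ⟪x, gₖ⟫`, so a Bessel bound `A⁻¹` for `g` is the lower Riesz bound `A`
for `f`. Conversely, the lower bound keeps each `fₖ` at distance at least `√A` from the closed span
of the other `fⱼ`; normalising the component of `fₖ` orthogonal to that span gives `gₖ`. It lies in
the closed span `M` of `f`, so its Bessel bound only has to be checked on `M`, and by continuity on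
the span of `f`, where it is again the lower Riesz bound.
-/

open scoped ENNReal InnerProductSpace ComplexConjugate
open Submodule Set

theorem Submodule.forall_mem_topologicalClosure_of_isClosed {R M : Type*} [Semiring R]
    [TopologicalSpace M] [AddCommMonoid M] [Module R M] [ContinuousConstSMul R M] [ContinuousAdd M]
    {p : Submodule R M} {P : M → Prop} (hP : IsClosed {x | P x}) (h : ∀ x ∈ p, P x) :
    ∀ x ∈ p.topologicalClosure, P x := fun _ hx =>
  closure_minimal h hP (p.topologicalClosure_coe ▸ hx)

section

variable {𝕜 ι H : Type*} [RCLike 𝕜] [NormedAddCommGroup H] [InnerProductSpace 𝕜 H]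

variable (𝕜) in
def IsBesselSeq (f : ι → H) (B : ℝ) : Prop :=
  ∀ (x : H) (s : Finset ι), ∑ k ∈ s, ‖⟪x, f k⟫_𝕜‖ ^ 2 ≤ B * ‖x‖ ^ 2

variable (𝕜) in
def HasLowerRieszBound (f : ι → H) (A : ℝ) : Prop :=
  ∀ c : ι →₀ 𝕜, A * ∑ k ∈ c.support, ‖c k‖ ^ 2 ≤ ‖∑ k ∈ c.support, c k • f k‖ ^ 2

variable (𝕜) in
def HasUpperRieszBound (f : ι → H) (B : ℝ) : Prop :=
  ∀ c : ι →₀ 𝕜, ‖∑ k ∈ c.support, c k • f k‖ ^ 2 ≤ B * ∑ k ∈ c.support, ‖c k‖ ^ 2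

theorem tsum_nnnorm_sq_le_ofReal_iff {a : ι → 𝕜} {C : ℝ} (hC : 0 ≤ C) :
    ∑' k, (‖a k‖₊ : ℝ≥0∞) ^ 2 ≤ ENNReal.ofReal C ↔ ∀ s : Finset ι, ∑ k ∈ s, ‖a k‖ ^ 2 ≤ C := by
  have hsum (s : Finset ι) :
      ∑ k ∈ s, (‖a k‖₊ : ℝ≥0∞) ^ 2 = ENNReal.ofReal (∑ k ∈ s, ‖a k‖ ^ 2) := by
    rw [ENNReal.ofReal_sum_of_nonneg fun k _ => by positivity]
    refine Finset.sum_congr rfl fun k _ => ?_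
    rw [ENNReal.ofReal_pow (norm_nonneg _), ofReal_norm, enorm_eq_nnnorm]
  simp_rw [ENNReal.tsum_eq_iSup_sum, iSup_le_iff, hsum, ENNReal.ofReal_le_ofReal_iff hC]

theorem isBesselSeq_iff_tsum {f : ι → H} {B : ℝ} (hB : 0 ≤ B) :
    IsBesselSeq 𝕜 f B ↔
      ∀ x : H, ∑' k, (‖⟪x, f k⟫_𝕜‖₊ : ℝ≥0∞) ^ 2 ≤ ENNReal.ofReal (B * ‖x‖ ^ 2) :=
  forall_congr' fun _ => (tsum_nnnorm_sq_le_ofReal_iff (by positivity)).symm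

theorem le_of_sq_le_mul {t K : ℝ} (hK : 0 ≤ K) (h : t ^ 2 ≤ K * t) : t ≤ K := by
  nlinarith

theorem norm_inner_sum_smul_sq_le (x : H) (s : Finset ι) (c : ι → 𝕜) (f : ι → H) :
    ‖⟪x, ∑ k ∈ s, c k • f k⟫_𝕜‖ ^ 2 ≤ (∑ k ∈ s, ‖c k‖ ^ 2) * ∑ k ∈ s, ‖⟪x, f k⟫_𝕜‖ ^ 2 :=
  calc ‖⟪x, ∑ k ∈ s, c k • f k⟫_𝕜‖ ^ 2 ≤ (∑ k ∈ s, ‖c k‖ * ‖⟪x, f k⟫_𝕜‖) ^ 2 := by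
        gcongr
        rw [inner_sum]
        exact (norm_sum_le _ _).trans_eq (by simp only [inner_smul_right, norm_mul])
    _ ≤ _ := Finset.sum_mul_sq_le_sq_mul_sq _ _ _

theorem IsBesselSeq.hasUpperRieszBound {f : ι → H} {B : ℝ} (hf : IsBesselSeq 𝕜 f B)
    (hB : 0 ≤ B) : HasUpperRieszBound 𝕜 f B := by
  intro c
  set s := c.support
  set F := ∑ k ∈ s, c k • f k
  refine le_of_sq_le_mul (by positivity) ?_
  calc (‖F‖ ^ 2) ^ 2 = ‖⟪F, F⟫_𝕜‖ ^ 2 := by rw [inner_self_eq_norm_sq_to_K]; simp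
    _ ≤ (∑ k ∈ s, ‖c k‖ ^ 2) * ∑ k ∈ s, ‖⟪F, f k⟫_𝕜‖ ^ 2 := norm_inner_sum_smul_sq_le F s c f
    _ ≤ (∑ k ∈ s, ‖c k‖ ^ 2) * (B * ‖F‖ ^ 2) := by gcongr; exact hf F s
    _ = B * (∑ k ∈ s, ‖c k‖ ^ 2) * ‖F‖ ^ 2 := by ring

theorem HasUpperRieszBound.isBesselSeq {f : ι → H} {B : ℝ} (hf : HasUpperRieszBound 𝕜 f B)
    (hB : 0 ≤ B) : IsBesselSeq 𝕜 f B := by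
  classical
  intro x s
  set T := ∑ k ∈ s, ‖⟪x, f k⟫_𝕜‖ ^ 2
  set u := ∑ k ∈ s, conj ⟪x, f k⟫_𝕜 • f k
  let c : ι →₀ 𝕜 := Finsupp.indicator s fun k _ => conj ⟪x, f k⟫_𝕜
  have hu : ‖u‖ ^ 2 ≤ B * T := by
    have hc := hf c
    rwa [show ∑ k ∈ c.support, c k • f k = u from
        Finsupp.sum_indicator_index (h := fun k a => a • f k) _ fun _ _ => zero_smul _ _,
      show ∑ k ∈ c.support, ‖c k‖ ^ 2 = T from
        (Finsupp.sum_indicator_index (h := fun _ a => ‖a‖ ^ 2) _ fun _ _ => by simp).trans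
          (by simp only [RCLike.norm_conj, T])] at hc
  have hxu : ⟪x, u⟫_𝕜 = T := by
    simp only [u, T, inner_sum]
    push_cast
    exact Finset.sum_congr rfl fun k _ => by rw [inner_smul_right, RCLike.conj_mul]
  refine le_of_sq_le_mul (by positivity) ?_
  calc T ^ 2 = ‖⟪x, u⟫_𝕜‖ ^ 2 := by rw [hxu, RCLike.norm_ofReal, abs_of_nonneg (by positivity)]
    _ ≤ (‖x‖ * ‖u‖) ^ 2 := by gcongr; exact norm_inner_le_norm x u
    _ ≤ ‖x‖ ^ 2 * (B * T) := by rw [mul_pow]; gcongr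
    _ = B * ‖x‖ ^ 2 * T := by ring

theorem isBesselSeq_iff_hasUpperRieszBound {f : ι → H} {B : ℝ} (hB : 0 ≤ B) :
    IsBesselSeq 𝕜 f B ↔ HasUpperRieszBound 𝕜 f B :=
  ⟨fun hf => hf.hasUpperRieszBound hB, fun hf => hf.isBesselSeq hB⟩

theorem inner_sum_smul_of_biorthogonal [DecidableEq ι] {f g : ι → H}
    (hfg : ∀ j k, ⟪f j, g k⟫_𝕜 = if j = k then 1 else 0) (c : ι →₀ 𝕜) (k : ι) :
    ⟪∑ j ∈ c.support, c j • f j, g k⟫_𝕜 = conj (c k) := by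
  simp only [sum_inner, inner_smul_left, hfg, mul_ite, mul_one, mul_zero, Finset.sum_ite_eq']
  split_ifs with hk
  · rfl
  · rw [Finsupp.notMem_support_iff.mp hk, map_zero]

theorem hasLowerRieszBound_of_biorthogonal [DecidableEq ι] {f g : ι → H} {A : ℝ} (hA : 0 < A)
    (hfg : ∀ j k, ⟪f j, g k⟫_𝕜 = if j = k then 1 else 0) (hg : IsBesselSeq 𝕜 g A⁻¹) :
    HasLowerRieszBound 𝕜 f A := by
  intro c
  have hc := hg (∑ k ∈ c.support, c k • f k) c.support
  simp only [inner_sum_smul_of_biorthogonal hfg, RCLike.norm_conj] at hc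
  rwa [le_inv_mul_iff₀ hA] at hc

theorem HasLowerRieszBound.mul_sum_norm_sq_le {f : ι → H} {A : ℝ} (hf : HasLowerRieszBound 𝕜 f A)
    (hA : 0 ≤ A) (c : ι →₀ 𝕜) (s : Finset ι) :
    A * ∑ k ∈ s, ‖c k‖ ^ 2 ≤ ‖∑ k ∈ c.support, c k • f k‖ ^ 2 := by
  classical
  refine le_trans (mul_le_mul_of_nonneg_left ?_ hA) (hf c)
  calc ∑ k ∈ s, ‖c k‖ ^ 2 = ∑ k ∈ s ∩ c.support, ‖c k‖ ^ 2 :=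
        (Finset.sum_subset Finset.inter_subset_left fun _ _ hk => by simp_all).symm
    _ ≤ ∑ k ∈ c.support, ‖c k‖ ^ 2 :=
        Finset.sum_le_sum_of_subset_of_nonneg Finset.inter_subset_right fun _ _ _ => by positivity

theorem HasLowerRieszBound.le_norm_sub_sq {f : ι → H} {A : ℝ} (hf : HasLowerRieszBound 𝕜 f A)
    (hA : 0 ≤ A) (k : ι) :
    ∀ y ∈ (span 𝕜 (f '' {j | j ≠ k})).topologicalClosure, A ≤ ‖f k - y‖ ^ 2 := by
  refine forall_mem_topologicalClosure_of_isClosed (isClosed_le continuous_const (by fun_prop)) ?_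
  intro y hy
  obtain ⟨c, hc, rfl⟩ := (Finsupp.mem_span_image_iff_linearCombination 𝕜).1 hy
  have hck : c k = 0 := Finsupp.notMem_support_iff.1 fun hk => hc hk rfl
  set d := Finsupp.single k 1 - c
  have hd : ∑ j ∈ d.support, d j • f j = f k - Finsupp.linearCombination 𝕜 f c :=
    (Finsupp.linearCombination_apply 𝕜 d).symm.trans (by simp [d])
  have hdk : d k = 1 := by simp [d, hck]
  simpa [hd, hdk] using hf.mul_sum_norm_sq_le hA d {k}

theorem HasLowerRieszBound.notMem_closure_span {f : ι → H} {A : ℝ}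
    (hf : HasLowerRieszBound 𝕜 f A) (hA : 0 < A) (k : ι) :
    f k ∉ (span 𝕜 (f '' {j | j ≠ k})).topologicalClosure := fun hk => by
  have := hf.le_norm_sub_sq hA.le k _ hk
  simp only [sub_self, norm_zero] at this
  linarith

theorem exists_biorthogonal_of_notMem_closure_span [CompleteSpace H] [DecidableEq ι] {f : ι → H}
    (hf : ∀ k, f k ∉ (span 𝕜 (f '' {j | j ≠ k})).topologicalClosure) :
    ∃ g : ι → H, (∀ j k, ⟪f j, g k⟫_𝕜 = if j = k then 1 else 0) ∧
      ∀ k, g k ∈ (span 𝕜 (range f)).topologicalClosure := by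
  set K := fun k => (span 𝕜 (f '' {j | j ≠ k})).topologicalClosure
  set h := fun k => f k - (K k).starProjection (f k)
  have hfK (j k : ι) (hjk : j ≠ k) : f j ∈ K k :=
    le_topologicalClosure _ (subset_span ⟨j, hjk, rfl⟩)
  have horth (k : ι) (v : H) (hv : v ∈ K k) : ⟪v, h k⟫_𝕜 = 0 :=
    (mem_orthogonal _ _).1 ((K k).sub_starProjection_mem_orthogonal (f k)) v hv
  have hfh (k : ι) : ⟪f k, h k⟫_𝕜 = ((‖h k‖ ^ 2 : ℝ) : 𝕜) := by
    rw [show f k = h k + (K k).starProjection (f k) by simp [h], inner_add_left,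
      horth k _ (starProjection_apply_mem _ _), add_zero, inner_self_eq_norm_sq_to_K]
    push_cast; rfl
  have hh (k : ι) : ‖h k‖ ^ 2 ≠ 0 := by
    simpa [h, sub_eq_zero, eq_comm (a := f k), starProjection_eq_self_iff] using hf k
  refine ⟨fun k => ((‖h k‖ ^ 2 : ℝ) : 𝕜)⁻¹ • h k, fun j k => ?_, fun k => ?_⟩
  · rw [inner_smul_right]
    split_ifs with hjk
    · subst hjk
      rw [hfh, inv_mul_cancel₀ (by exact_mod_cast hh j)]
    · rw [horth k _ (hfK j k hjk), mul_zero]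
  · refine smul_mem _ _ (sub_mem (le_topologicalClosure _ (subset_span ⟨k, rfl⟩)) ?_)
    exact topologicalClosure_mono (span_mono (image_subset_range _ _)) (starProjection_apply_mem _ _)

theorem IsBesselSeq.of_forall_mem {K : Submodule 𝕜 H} [K.HasOrthogonalProjection] {g : ι → H}
    {C : ℝ} (hC : 0 ≤ C) (hg : ∀ k, g k ∈ K)
    (hK : ∀ x ∈ K, ∀ s : Finset ι, ∑ k ∈ s, ‖⟪x, g k⟫_𝕜‖ ^ 2 ≤ C * ‖x‖ ^ 2) :
    IsBesselSeq 𝕜 g C := fun x s =>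
  calc ∑ k ∈ s, ‖⟪x, g k⟫_𝕜‖ ^ 2 = ∑ k ∈ s, ‖⟪K.starProjection x, g k⟫_𝕜‖ ^ 2 := by
        simp only [inner_starProjection_left_eq_right, starProjection_eq_self_iff.2 (hg _)]
    _ ≤ C * ‖K.starProjection x‖ ^ 2 := hK _ (starProjection_apply_mem _ _) s
    _ ≤ C * ‖x‖ ^ 2 := by gcongr; exact norm_starProjection_apply_le _ _

theorem HasLowerRieszBound.isBesselSeq_of_biorthogonal [CompleteSpace H] [DecidableEq ι]
    {f g : ι → H} {A : ℝ} (hf : HasLowerRieszBound 𝕜 f A) (hA : 0 < A)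
    (hfg : ∀ j k, ⟪f j, g k⟫_𝕜 = if j = k then 1 else 0)
    (hg : ∀ k, g k ∈ (span 𝕜 (range f)).topologicalClosure) :
    IsBesselSeq 𝕜 g A⁻¹ := by
  refine IsBesselSeq.of_forall_mem (inv_nonneg.2 hA.le) hg fun x hx s => ?_
  revert x
  refine forall_mem_topologicalClosure_of_isClosed (isClosed_le (by fun_prop) (by fun_prop)) ?_
  intro y hy
  obtain ⟨c, rfl⟩ := Finsupp.mem_span_range_iff_exists_finsupp.1 hy
  simp only [Finsupp.sum, inner_sum_smul_of_biorthogonal hfg, RCLike.norm_conj]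
  rw [le_inv_mul_iff₀ hA]
  exact hf.mul_sum_norm_sq_le hA.le c s

end

/-- **Characterization of Riesz sequences in Hilbert spaces.** A sequence `(f_k)` in a
complex Hilbert space is a Riesz sequence with bounds `A, B` if and only if it is a
Bessel system with bound `B` and possesses a biorthogonal system which is a Bessel
system with bound `A⁻¹`. -/
theorem riesz_sequence_characterization
    {H : Type*} [NormedAddCommGroup H] [InnerProductSpace ℂ H] [CompleteSpace H]
    (f : ℕ → H) (A B : ℝ) (hA : 0 < A) (hAB : A ≤ B) :
    (∀ c : ℕ →₀ ℂ,
      A * ∑ k ∈ c.support, ‖c k‖ ^ 2 ≤ ‖∑ k ∈ c.support, c k • f k‖ ^ 2 ∧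
      ‖∑ k ∈ c.support, c k • f k‖ ^ 2 ≤ B * ∑ k ∈ c.support, ‖c k‖ ^ 2) ↔
    ((∀ x : H, ∑' k : ℕ, (‖(inner ℂ x (f k) : ℂ)‖₊ : ℝ≥0∞) ^ 2
        ≤ ENNReal.ofReal (B * ‖x‖ ^ 2)) ∧
      ∃ g : ℕ → H,
        (∀ j k : ℕ, (inner ℂ (f j) (g k) : ℂ) = if j = k then 1 else 0) ∧
        ∀ x : H, ∑' k : ℕ, (‖(inner ℂ x (g k) : ℂ)‖₊ : ℝ≥0∞) ^ 2
          ≤ ENNReal.ofReal (A⁻¹ * ‖x‖ ^ 2)) := by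
  have hB : 0 ≤ B := hA.le.trans hAB
  simp_rw [← isBesselSeq_iff_tsum hB, ← isBesselSeq_iff_tsum (inv_nonneg.2 hA.le), forall_and]
  change HasLowerRieszBound ℂ f A ∧ HasUpperRieszBound ℂ f B ↔ _
  rw [← isBesselSeq_iff_hasUpperRieszBound hB]
  constructor
  · rintro ⟨hlower, hf⟩
    obtain ⟨g, hfg, hg⟩ := exists_biorthogonal_of_notMem_closure_span (hlower.notMem_closure_span hA)
    exact ⟨hf, g, hfg, hlower.isBesselSeq_of_biorthogonal hA hfg hg⟩
  · rintro ⟨hf, g, hfg, hg⟩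
    exact ⟨hasLowerRieszBound_of_biorthogonal hA hfg hg, hf⟩
end
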